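/- arXiv:1207.4749 — 4 statements merged into one kernel-verified Lean document; each statement's English description precedes it below -/
import Mathlib

section
/- Let K̄ := {(a,b) ∈ ℝ² : |b| ≤ a} and define u(a,b) := ∫_{−1}^{1} √(a + bs)·(s+1)^{3/2} ds for (a,b) ∈ K̄. Then u is finite at every point of K̄, concave on K̄, and continuous on K̄. -/
/-!
For each `s ∈ [-1, 1]` the integrand is the square root of a linear function of `(a, b)` that
is nonnegative on `K̄`, times a nonnegative weight, hence concave on `K̄`; integrating in `s`
preserves concavity. Since `Real.sqrt` is continuous on all of `ℝ`, the integrand is jointly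
continuous in `((a, b), s)`, which gives integrability and continuity of the parametric integral.
-/

open MeasureTheory Set

lemma add_mul_nonneg_of_abs_le {a b s : ℝ} (hab : |b| ≤ a) (hs : |s| ≤ 1) : 0 ≤ a + b * s := by
  have : |b * s| ≤ a := by
    rw [abs_mul]
    exact (mul_le_of_le_one_right (abs_nonneg b) hs).trans hab
  linarith [neg_abs_le (b * s)]

lemma convex_abs_snd_le_fst : Convex ℝ {w : ℝ × ℝ | |w.2| ≤ w.1} := by
  have := (((convexOn_norm convex_univ).comp_linearMap (LinearMap.snd ℝ ℝ ℝ)).sub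
    ((LinearMap.fst ℝ ℝ ℝ).concaveOn convex_univ)).convex_le 0
  simpa [sub_nonpos] using this

lemma concaveOn_sqrt_fst_add_snd_mul (s : ℝ) :
    ConcaveOn ℝ {w : ℝ × ℝ | 0 ≤ w.1 + w.2 * s} fun w => √(w.1 + w.2 * s) := by
  convert Real.strictConcaveOn_sqrt.concaveOn.comp_linearMap
    (LinearMap.fst ℝ ℝ ℝ + s • LinearMap.snd ℝ ℝ ℝ) using 1 <;> ext <;> simp [mul_comm]

theorem concaveOn_intervalIntegral {E : Type*} [AddCommGroup E] [Module ℝ E] {K : Set E}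
    (hK : Convex ℝ K) {F : E → ℝ → ℝ} {a b : ℝ} (hab : a ≤ b)
    (hF : ∀ s ∈ Icc a b, ConcaveOn ℝ K (F · s))
    (hint : ∀ w ∈ K, IntervalIntegrable (F w) volume a b) :
    ConcaveOn ℝ K fun w => ∫ s in a..b, F w s := by
  refine ⟨hK, fun x hx y hy t t' ht ht' htt' => ?_⟩
  simp only [smul_eq_mul]
  rw [← intervalIntegral.integral_const_mul, ← intervalIntegral.integral_const_mul,
    ← intervalIntegral.integral_add ((hint x hx).const_mul t) ((hint y hy).const_mul t')]
  exact intervalIntegral.integral_mono_on hab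
    (((hint x hx).const_mul t).add ((hint y hy).const_mul t'))
    (hint _ (hK hx hy ht ht' htt')) fun s hs => (hF s hs).2 hx hy ht ht' htt'

section WeightedSqrtIntegral

variable {g : ℝ → ℝ}

lemma continuous_sqrt_fst_add_snd_mul_mul (hg : Continuous g) :
    Continuous fun p : (ℝ × ℝ) × ℝ => √(p.1.1 + p.1.2 * p.2) * g p.2 := by
  fun_prop

lemma intervalIntegrable_sqrt_add_mul_mul (hg : Continuous g) (w : ℝ × ℝ) (a b : ℝ) :
    IntervalIntegrable (fun s => √(w.1 + w.2 * s) * g s) volume a b :=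
  ((continuous_sqrt_fst_add_snd_mul_mul hg).comp (Continuous.prodMk_right w)).intervalIntegrable
    _ _

lemma continuous_integral_sqrt_add_mul_mul (hg : Continuous g) (a b : ℝ) :
    Continuous fun w : ℝ × ℝ => ∫ s in a..b, √(w.1 + w.2 * s) * g s :=
  intervalIntegral.continuous_parametric_intervalIntegral_of_continuous'
    (continuous_sqrt_fst_add_snd_mul_mul hg) a b

lemma concaveOn_integral_sqrt_add_mul_mul (hg : Continuous g)
    (hg₀ : ∀ s ∈ Icc (-1) 1, 0 ≤ g s) :
    ConcaveOn ℝ {w : ℝ × ℝ | |w.2| ≤ w.1} fun w => ∫ s in (-1)..1, √(w.1 + w.2 * s) * g s := by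
  refine concaveOn_intervalIntegral convex_abs_snd_le_fst (by norm_num) (fun s hs => ?_)
    fun w _ => intervalIntegrable_sqrt_add_mul_mul hg w _ _
  have hK : {w : ℝ × ℝ | |w.2| ≤ w.1} ⊆ {w | 0 ≤ w.1 + w.2 * s} := fun w hw =>
    add_mul_nonneg_of_abs_le hw (abs_le.2 hs)
  simpa only [smul_eq_mul, mul_comm] using
    ((concaveOn_sqrt_fst_add_snd_mul s).subset hK convex_abs_snd_le_fst).smul (hg₀ s hs)

end WeightedSqrtIntegral

theorem stmt4 (u : ℝ × ℝ → ℝ)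
    (hu : ∀ w : ℝ × ℝ, u w = ∫ s in (-1 : ℝ)..1, Real.sqrt (w.1 + w.2 * s) * (s + 1) ^ ((3 : ℝ) / 2))
    (K : Set (ℝ × ℝ)) (hK : K = {w : ℝ × ℝ | |w.2| ≤ w.1}) :
    (∀ w ∈ K, IntervalIntegrable
        (fun s : ℝ => Real.sqrt (w.1 + w.2 * s) * (s + 1) ^ ((3 : ℝ) / 2)) volume (-1) 1) ∧
      ConcaveOn ℝ K u ∧ ContinuousOn u K := by
  obtain rfl : u = _ := funext hu
  subst hK
  have hg : Continuous fun s : ℝ => (s + 1) ^ ((3 : ℝ) / 2) := by fun_prop (disch := norm_num)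
  have hg₀ : ∀ s ∈ Icc (-1 : ℝ) 1, 0 ≤ (s + 1) ^ ((3 : ℝ) / 2) := fun s hs =>
    Real.rpow_nonneg (by linarith [hs.1]) _
  exact ⟨fun w _ => intervalIntegrable_sqrt_add_mul_mul hg w _ _,
    concaveOn_integral_sqrt_add_mul_mul hg hg₀,
    (continuous_integral_sqrt_add_mul_mul hg _ _).continuousOn⟩
end

section
/- Fix x > 0 and define h(q) := ∫_{−1}^{1} √(x + qs)·(s+1)^{3/2} ds for q ∈ [−x, x]. Then h is strictly increasing on [−x, x]; in particular, the maximum of h over [−x, x] is attained only at q = x. -/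
set_option maxHeartbeats 1000000

private lemma stmt7_rpow_sq {t : ℝ} (ht : 0 ≤ t) : (t ^ ((3:ℝ)/2)) ^ 2 = t ^ 3 := by
  have h32 : ((3:ℝ)/2) * ((2:ℕ):ℝ) = ((3:ℕ):ℝ) := by norm_num
  rw [← Real.rpow_natCast (t ^ ((3:ℝ)/2)) 2, ← Real.rpow_mul ht, h32, Real.rpow_natCast]

/-- Squared key inequality: `(1-s)^3 (x+qs) ≤ (1+s)^3 (x-qs)` for `q ≤ x`, `s ∈ [0,1]`. -/
private lemma stmt7_sq_ineq {x s q : ℝ} (hx : 0 ≤ x) (hs0 : 0 ≤ s) (hs1 : s ≤ 1)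
    (hq : q ≤ x) : (1 - s) ^ 3 * (x + q * s) ≤ (1 + s) ^ 3 * (x - q * s) := by
  nlinarith [mul_nonneg hs0 (sub_nonneg.2 hq),
    mul_nonneg (mul_nonneg (mul_nonneg hs0 (sub_nonneg.2 hq)) hs0) hs0,
    mul_nonneg (mul_nonneg (mul_nonneg hs0 hx) (by linarith : (0:ℝ) ≤ 1 - s))
      (by linarith : (0:ℝ) ≤ 1 + s)]

private lemma stmt7_sq_ineq_strict {x s q : ℝ} (hx : 0 < x) (hs0 : 0 < s) (hs1 : s < 1)
    (hq : q ≤ x) : (1 - s) ^ 3 * (x + q * s) < (1 + s) ^ 3 * (x - q * s) := by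
  nlinarith [mul_nonneg hs0.le (sub_nonneg.2 hq),
    mul_nonneg (mul_nonneg (mul_nonneg hs0.le (sub_nonneg.2 hq)) hs0.le) hs0.le,
    mul_pos (mul_pos (mul_pos hs0 hx) (by linarith : (0:ℝ) < 1 - s))
      (by linarith : (0:ℝ) < 1 + s)]

/-- Pointwise monotonicity in `q` of the symmetrized integrand. -/
private lemma stmt7_ptwise {x s p q : ℝ} (hx : 0 < x) (hs0 : 0 ≤ s) (hs1 : s ≤ 1)
    (hp : -x ≤ p) (hpq : p ≤ q) (hq : q ≤ x) :
    Real.sqrt (x + p * s) * (s + 1) ^ ((3:ℝ)/2)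
      + Real.sqrt (x + p * -s) * (-s + 1) ^ ((3:ℝ)/2) ≤
    Real.sqrt (x + q * s) * (s + 1) ^ ((3:ℝ)/2)
      + Real.sqrt (x + q * -s) * (-s + 1) ^ ((3:ℝ)/2) := by
  have hxp1 : 0 ≤ x + p * s := by
    nlinarith [mul_nonneg (by linarith : (0:ℝ) ≤ p + x) hs0,
      mul_nonneg hx.le (by linarith : (0:ℝ) ≤ 1 - s)]
  have hxp2 : 0 ≤ x + q * s := by
    nlinarith [mul_nonneg (by linarith : (0:ℝ) ≤ q + x) hs0,
      mul_nonneg hx.le (by linarith : (0:ℝ) ≤ 1 - s)]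
  have hxm1 : 0 ≤ x + p * -s := by
    nlinarith [mul_nonneg (by linarith : (0:ℝ) ≤ x - p) hs0,
      mul_nonneg hx.le (by linarith : (0:ℝ) ≤ 1 - s)]
  have hxm2 : 0 ≤ x + q * -s := by
    nlinarith [mul_nonneg (by linarith : (0:ℝ) ≤ x - q) hs0,
      mul_nonneg hx.le (by linarith : (0:ℝ) ≤ 1 - s)]
  set a1 := Real.sqrt (x + p * s) with ha1def
  set a2 := Real.sqrt (x + q * s) with ha2def
  set b1 := Real.sqrt (x + p * -s) with hb1def
  set b2 := Real.sqrt (x + q * -s) with hb2def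
  set A := (s + 1) ^ ((3:ℝ)/2) with hAdef
  set B := (-s + 1) ^ ((3:ℝ)/2) with hBdef
  have ha1 : a1 ^ 2 = x + p * s := Real.sq_sqrt hxp1
  have ha2 : a2 ^ 2 = x + q * s := Real.sq_sqrt hxp2
  have hb1 : b1 ^ 2 = x + p * -s := Real.sq_sqrt hxm1
  have hb2 : b2 ^ 2 = x + q * -s := Real.sq_sqrt hxm2
  have ha1n : 0 ≤ a1 := Real.sqrt_nonneg _
  have ha2n : 0 ≤ a2 := Real.sqrt_nonneg _
  have hb1n : 0 ≤ b1 := Real.sqrt_nonneg _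
  have hb2n : 0 ≤ b2 := Real.sqrt_nonneg _
  have hA0 : 0 ≤ A := Real.rpow_nonneg (by linarith) _
  have hB0 : 0 ≤ B := Real.rpow_nonneg (by linarith) _
  have hA2 : A ^ 2 = (s + 1) ^ 3 := stmt7_rpow_sq (by linarith)
  have hB2 : B ^ 2 = (-s + 1) ^ 3 := stmt7_rpow_sq (by linarith)
  have ha12 : a1 ≤ a2 := Real.sqrt_le_sqrt (by nlinarith [mul_nonneg (sub_nonneg.2 hpq) hs0])
  have hb21 : b2 ≤ b1 := Real.sqrt_le_sqrt (by nlinarith [mul_nonneg (sub_nonneg.2 hpq) hs0])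
  -- key inequality : B * a2 ≤ A * b2
  have hK : B * a2 ≤ A * b2 := by
    have hsq : (B * a2) ^ 2 ≤ (A * b2) ^ 2 := by
      have h := stmt7_sq_ineq hx.le hs0 hs1 hq
      have : (B * a2) ^ 2 = (1 - s) ^ 3 * (x + q * s) := by
        rw [mul_pow, hB2, ha2]; ring
      rw [this, mul_pow, hA2, hb2]
      calc (1 - s) ^ 3 * (x + q * s) ≤ (1 + s) ^ 3 * (x - q * s) := h
        _ = (s + 1) ^ 3 * (x + q * -s) := by ring
    exact le_of_pow_le_pow_left₀ two_ne_zero (mul_nonneg hA0 hb2n) hsq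
  have e1 : (a2 - a1) * (a2 + a1) = (q - p) * s := by linear_combination ha2 - ha1
  have e2 : (b1 - b2) * (b1 + b2) = (q - p) * s := by linear_combination hb1 - hb2
  by_cases hP : 0 < (a1 + a2) * (b1 + b2)
  · have hAB : B * (a1 + a2) ≤ A * (b1 + b2) := by
      nlinarith [hK, mul_nonneg hA0 (sub_nonneg.2 hb21), mul_nonneg hB0 (sub_nonneg.2 ha12)]
    have ht : 0 ≤ (q - p) * s := mul_nonneg (by linarith) hs0
    have key : B * (b1 - b2) * ((a1 + a2) * (b1 + b2)) ≤
        A * (a2 - a1) * ((a1 + a2) * (b1 + b2)) := by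
      have h1 : B * (b1 - b2) * ((a1 + a2) * (b1 + b2)) = ((q - p) * s) * (B * (a1 + a2)) := by
        linear_combination (B * (a1 + a2)) * e2
      have h2 : A * (a2 - a1) * ((a1 + a2) * (b1 + b2)) = ((q - p) * s) * (A * (b1 + b2)) := by
        linear_combination (A * (b1 + b2)) * e1
      rw [h1, h2]
      exact mul_le_mul_of_nonneg_left hAB ht
    have := le_of_mul_le_mul_right key hP
    linarith
  · push_neg at hP
    have hPz : (a1 + a2) * (b1 + b2) = 0 :=
      le_antisymm hP (mul_nonneg (by linarith) (by linarith))
    rcases mul_eq_zero.1 hPz with h0 | h0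
    · have ha1z : a1 = 0 := by linarith
      have ha2z : a2 = 0 := by linarith
      have ht0 : (q - p) * s = 0 := by
        rw [← e1, ha1z, ha2z]; ring
      have hbprod : (b1 - b2) * (b1 + b2) = 0 := by rw [e2, ht0]
      rcases mul_eq_zero.1 hbprod with h1 | h1
      · have : b1 = b2 := by linarith
        rw [ha1z, ha2z, this]
      · have hb1z : b1 = 0 := by linarith
        have hb2z : b2 = 0 := by linarith
        rw [ha1z, ha2z, hb1z, hb2z]
    · have hb1z : b1 = 0 := by linarith
      have hb2z : b2 = 0 := by linarith
      rw [hb1z, hb2z]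
      have := mul_le_mul_of_nonneg_right ha12 hA0
      linarith
/-- Strict pointwise inequality at `s = 1/2`. -/
private lemma stmt7_ptwise_strict {x p q : ℝ} (hx : 0 < x)
    (hp : -x ≤ p) (hpq : p < q) (hq : q ≤ x) :
    Real.sqrt (x + p * (1/2 : ℝ)) * ((1/2 : ℝ) + 1) ^ ((3:ℝ)/2)
      + Real.sqrt (x + p * -(1/2 : ℝ)) * (-(1/2 : ℝ) + 1) ^ ((3:ℝ)/2) <
    Real.sqrt (x + q * (1/2 : ℝ)) * ((1/2 : ℝ) + 1) ^ ((3:ℝ)/2)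
      + Real.sqrt (x + q * -(1/2 : ℝ)) * (-(1/2 : ℝ) + 1) ^ ((3:ℝ)/2) := by
  have hxp1 : 0 < x + p * (1/2 : ℝ) := by linarith
  have hxp2 : 0 < x + q * (1/2 : ℝ) := by linarith
  have hxm1 : 0 < x + p * -(1/2 : ℝ) := by linarith
  have hxm2 : 0 < x + q * -(1/2 : ℝ) := by linarith
  set a1 := Real.sqrt (x + p * (1/2 : ℝ)) with ha1def
  set a2 := Real.sqrt (x + q * (1/2 : ℝ)) with ha2def
  set b1 := Real.sqrt (x + p * -(1/2 : ℝ)) with hb1def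
  set b2 := Real.sqrt (x + q * -(1/2 : ℝ)) with hb2def
  set A := ((1/2 : ℝ) + 1) ^ ((3:ℝ)/2) with hAdef
  set B := (-(1/2 : ℝ) + 1) ^ ((3:ℝ)/2) with hBdef
  have ha1 : a1 ^ 2 = x + p * (1/2 : ℝ) := Real.sq_sqrt hxp1.le
  have ha2 : a2 ^ 2 = x + q * (1/2 : ℝ) := Real.sq_sqrt hxp2.le
  have hb1 : b1 ^ 2 = x + p * -(1/2 : ℝ) := Real.sq_sqrt hxm1.le
  have hb2 : b2 ^ 2 = x + q * -(1/2 : ℝ) := Real.sq_sqrt hxm2.le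
  have ha1p : 0 < a1 := Real.sqrt_pos.2 hxp1
  have ha2p : 0 < a2 := Real.sqrt_pos.2 hxp2
  have hb1p : 0 < b1 := Real.sqrt_pos.2 hxm1
  have hb2p : 0 < b2 := Real.sqrt_pos.2 hxm2
  have hA0 : 0 ≤ A := Real.rpow_nonneg (by norm_num) _
  have hB0 : 0 ≤ B := Real.rpow_nonneg (by norm_num) _
  have hA2 : A ^ 2 = ((1/2 : ℝ) + 1) ^ 3 := stmt7_rpow_sq (by norm_num)
  have hB2 : B ^ 2 = (-(1/2 : ℝ) + 1) ^ 3 := stmt7_rpow_sq (by norm_num)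
  have ha12 : a1 ≤ a2 := Real.sqrt_le_sqrt (by linarith)
  have hb21 : b2 ≤ b1 := Real.sqrt_le_sqrt (by linarith)
  have hK : B * a2 < A * b2 := by
    have hsq : (B * a2) ^ 2 < (A * b2) ^ 2 := by
      have h := stmt7_sq_ineq_strict (x := x) (s := (1/2 : ℝ)) (q := q) hx
        (by norm_num) (by norm_num) hq
      have h1 : (B * a2) ^ 2 = (1 - (1/2 : ℝ)) ^ 3 * (x + q * (1/2 : ℝ)) := by
        rw [mul_pow, hB2, ha2]; ring
      have h2 : (A * b2) ^ 2 = (1 + (1/2 : ℝ)) ^ 3 * (x - q * (1/2 : ℝ)) := by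
        rw [mul_pow, hA2, hb2]; ring
      rw [h1, h2]; exact h
    exact lt_of_pow_lt_pow_left₀ 2 (mul_nonneg hA0 hb2p.le) hsq
  have e1 : (a2 - a1) * (a2 + a1) = (q - p) * (1/2 : ℝ) := by linear_combination ha2 - ha1
  have e2 : (b1 - b2) * (b1 + b2) = (q - p) * (1/2 : ℝ) := by linear_combination hb1 - hb2
  have hP : 0 < (a1 + a2) * (b1 + b2) := by positivity
  have hAB : B * (a1 + a2) < A * (b1 + b2) := by
    nlinarith [hK, mul_nonneg hA0 (sub_nonneg.2 hb21), mul_nonneg hB0 (sub_nonneg.2 ha12)]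
  have ht : 0 < (q - p) * (1/2 : ℝ) := by linarith
  have key : B * (b1 - b2) * ((a1 + a2) * (b1 + b2)) <
      A * (a2 - a1) * ((a1 + a2) * (b1 + b2)) := by
    have h1 : B * (b1 - b2) * ((a1 + a2) * (b1 + b2)) = ((q - p) * (1/2 : ℝ)) * (B * (a1 + a2)) := by
      linear_combination (B * (a1 + a2)) * e2
    have h2 : A * (a2 - a1) * ((a1 + a2) * (b1 + b2)) = ((q - p) * (1/2 : ℝ)) * (A * (b1 + b2)) := by
      linear_combination (A * (b1 + b2)) * e1
    rw [h1, h2]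
    exact mul_lt_mul_of_pos_left hAB ht
  have := lt_of_mul_lt_mul_right key hP.le
  linarith

theorem stmt7 (x : ℝ) (hx : 0 < x) (h : ℝ → ℝ)
    (hh : ∀ q : ℝ, h q = ∫ s in (-1 : ℝ)..1, Real.sqrt (x + q * s) * (s + 1) ^ ((3 : ℝ) / 2)) :
    StrictMonoOn h (Set.Icc (-x) x) ∧
      ∀ q ∈ Set.Icc (-x) x, q ≠ x → h q < h x := by
  have hcont : ∀ q : ℝ, Continuous (fun s : ℝ => Real.sqrt (x + q * s) * (s + 1) ^ ((3:ℝ)/2)) := by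
    intro q
    exact (Real.continuous_sqrt.comp (continuous_const.add (continuous_const.mul continuous_id))).mul
      ((continuous_id.add continuous_const).rpow_const fun s => Or.inr (by norm_num))
  have hcontG : ∀ q : ℝ, Continuous (fun s : ℝ =>
      Real.sqrt (x + q * s) * (s + 1) ^ ((3:ℝ)/2)
        + Real.sqrt (x + q * -s) * (-s + 1) ^ ((3:ℝ)/2)) := by
    intro q
    exact (hcont q).add ((hcont q).comp continuous_neg)
  have sym : ∀ q : ℝ, h q = ∫ s in (0:ℝ)..1,
      (Real.sqrt (x + q * s) * (s + 1) ^ ((3:ℝ)/2)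
        + Real.sqrt (x + q * -s) * (-s + 1) ^ ((3:ℝ)/2)) := by
    intro q
    rw [hh q]
    have hint1 : IntervalIntegrable (fun s : ℝ => Real.sqrt (x + q * s) * (s + 1) ^ ((3:ℝ)/2))
        MeasureTheory.volume (-1 : ℝ) 0 := (hcont q).intervalIntegrable _ _
    have hint2 : IntervalIntegrable (fun s : ℝ => Real.sqrt (x + q * s) * (s + 1) ^ ((3:ℝ)/2))
        MeasureTheory.volume (0 : ℝ) 1 := (hcont q).intervalIntegrable _ _
    have hint3 : IntervalIntegrable (fun s : ℝ => Real.sqrt (x + q * -s) * (-s + 1) ^ ((3:ℝ)/2))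
        MeasureTheory.volume (0 : ℝ) 1 := ((hcont q).comp continuous_neg).intervalIntegrable _ _
    rw [← intervalIntegral.integral_add_adjacent_intervals hint1 hint2,
      intervalIntegral.integral_add hint2 hint3]
    have hneg : (∫ s in (0:ℝ)..1, Real.sqrt (x + q * -s) * (-s + 1) ^ ((3:ℝ)/2))
        = ∫ s in (-1:ℝ)..(-0:ℝ), Real.sqrt (x + q * s) * (s + 1) ^ ((3:ℝ)/2) :=
      intervalIntegral.integral_comp_neg (fun s : ℝ => Real.sqrt (x + q * s) * (s + 1) ^ ((3:ℝ)/2))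
    rw [hneg]
    norm_num
    ring
  have hsm : StrictMonoOn h (Set.Icc (-x) x) := by
    intro p hp q hq hpq
    rw [sym p, sym q]
    apply intervalIntegral.integral_lt_integral_of_continuousOn_of_le_of_exists_lt
      (by norm_num : (0:ℝ) < 1) ((hcontG p).continuousOn) ((hcontG q).continuousOn)
    · intro s hs
      exact stmt7_ptwise hx hs.1.le hs.2 hp.1 hpq.le hq.2
    · exact ⟨1/2, by norm_num, stmt7_ptwise_strict hx hp.1 hpq hq.2⟩
  refine ⟨hsm, fun q hq hne => ?_⟩
  exact hsm hq ⟨by linarith, le_refl x⟩ (lt_of_le_of_ne hq.2 hne)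
end

section
/- Let u(a,b) := ∫_{−1}^{1} √(a + bs)·(s+1)^{3/2} ds for (a,b) with |b| ≤ a. Then for every x > 0 and every (a,b) with |b| ≤ a ≤ x, one has u(a,b) ≤ u(x,x), i.e. the maximum of u over {(a,b) : |b| ≤ a ≤ x} is attained at (x,x). -/
set_option maxHeartbeats 1000000


theorem stmt8 (u : ℝ → ℝ → ℝ)
    (hu : ∀ a b : ℝ, u a b = ∫ s in (-1 : ℝ)..1, Real.sqrt (a + b * s) * (s + 1) ^ ((3 : ℝ) / 2))
    (x : ℝ) (hx : 0 < x) :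
    ∀ a b : ℝ, |b| ≤ a → a ≤ x → u a b ≤ u x x := by
  intro a b hab hax
  obtain ⟨hb1, hb2⟩ := abs_le.mp hab
  have ha0 : 0 ≤ a := le_trans (abs_nonneg b) hab
  set c := Real.sqrt x with hc
  have hc0 : 0 < c := Real.sqrt_pos.2 hx
  have hcx : c ^ 2 = x := Real.sq_sqrt hx.le
  -- rewriting the rpow
  have hrpow : ∀ s : ℝ, -1 ≤ s → (s + 1) ^ ((3 : ℝ) / 2) = Real.sqrt (s + 1) * (s + 1) := by
    intro s hs
    have h1 : (0 : ℝ) ≤ s + 1 := by linarith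
    rw [show (3 : ℝ) / 2 = 1 / 2 + 1 by norm_num, Real.rpow_add' h1 (by norm_num),
      Real.rpow_one, ← Real.sqrt_eq_rpow]
  -- continuity of the rpow factor
  have hcont : Continuous fun s : ℝ => (s + 1) ^ ((3 : ℝ) / 2) := by
    apply Continuous.rpow_const (by continuity)
    intro s; right; norm_num
  -- value at (x, x)
  have huxx : u x x = 8 / 3 * c := by
    rw [hu]
    have hcongr : Set.EqOn (fun s => Real.sqrt (x + x * s) * (s + 1) ^ ((3 : ℝ) / 2))
        (fun s => c * (s + 1) ^ 2) (Set.uIcc (-1 : ℝ) 1) := by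
      intro s hs
      rw [Set.uIcc_of_le (by norm_num : (-1:ℝ) ≤ 1)] at hs
      have h1 : (0 : ℝ) ≤ s + 1 := by linarith [hs.1]
      have : x + x * s = x * (s + 1) := by ring
      simp only [this, hrpow s hs.1, Real.sqrt_mul hx.le]
      rw [← hc]
      have h2 : Real.sqrt (s + 1) * Real.sqrt (s + 1) = s + 1 := Real.mul_self_sqrt h1
      linear_combination c * (s + 1) * h2
    rw [intervalIntegral.integral_congr hcongr, intervalIntegral.integral_const_mul]
    have : ∫ s in (-1 : ℝ)..1, (s + 1) ^ 2 = ∫ t in (0 : ℝ)..2, t ^ 2 := by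
      rw [show (0:ℝ) = -1 + 1 by norm_num, show (2:ℝ) = 1 + 1 by norm_num,
        ← intervalIntegral.integral_comp_add_right (fun t => t ^ 2) 1]
    rw [this, integral_pow]
    norm_num; ring
  -- generic polynomial integral
  have hpoly : ∀ p q r : ℝ, (∫ s in (-1 : ℝ)..1, (p + q * s + r * s ^ 2)) = 2 * p + 2 / 3 * r := by
    intro p q r
    have i1 : IntervalIntegrable (fun s : ℝ => p + q * s) MeasureTheory.volume (-1) 1 :=
      (Continuous.intervalIntegrable (by continuity) _ _)
    have i2 : IntervalIntegrable (fun s : ℝ => r * s ^ 2) MeasureTheory.volume (-1) 1 :=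
      (Continuous.intervalIntegrable (by continuity) _ _)
    have i3 : IntervalIntegrable (fun s : ℝ => q * s) MeasureTheory.volume (-1) 1 :=
      (Continuous.intervalIntegrable (by continuity) _ _)
    rw [intervalIntegral.integral_add i1 i2, intervalIntegral.integral_add
      (intervalIntegrable_const) i3, intervalIntegral.integral_const,
      intervalIntegral.integral_const_mul, intervalIntegral.integral_const_mul,
      integral_id, integral_pow]
    norm_num
    ring
  -- the majorant
  set g : ℝ → ℝ := fun s => 1 / (2 * c) * ((a + b * s) * (s + 1)) + c / 2 * (s + 1) ^ 2 with hg
  have hgle : u a b ≤ ∫ s in (-1 : ℝ)..1, g s := by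
    rw [hu]
    apply intervalIntegral.integral_mono_on (by norm_num)
    · exact Continuous.intervalIntegrable
        (((Real.continuous_sqrt.comp (by continuity)).mul hcont)) _ _
    · exact Continuous.intervalIntegrable (by continuity) _ _
    · intro s hs
      obtain ⟨hs1, hs2⟩ := hs
      have hQ : (0 : ℝ) ≤ s + 1 := by linarith
      have hP : (0 : ℝ) ≤ a + b * s := by
        nlinarith [mul_nonneg (sub_nonneg.2 hb2) hQ,
          mul_nonneg (add_nonneg (by linarith : (0:ℝ) ≤ a + b) (by norm_num : (0:ℝ) ≤ 0))
            (by linarith : (0:ℝ) ≤ 1 - s), mul_nonneg (by linarith : (0:ℝ) ≤ a + b)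
            (by linarith : (0:ℝ) ≤ 1 - s)]
      rw [hrpow s hs1]
      have key : Real.sqrt (a + b * s) * Real.sqrt (s + 1) ≤
          ((a + b * s) + x * (s + 1)) / (2 * c) := by
        rw [le_div_iff₀ (by positivity)]
        have e3 : (c * Real.sqrt (s + 1)) ^ 2 = x * (s + 1) := by
          rw [mul_pow, Real.sq_sqrt hQ, hcx]
        nlinarith [sq_nonneg (Real.sqrt (a + b * s) - c * Real.sqrt (s + 1)),
          Real.sq_sqrt hP, e3]
      calc Real.sqrt (a + b * s) * (Real.sqrt (s + 1) * (s + 1))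
          = (Real.sqrt (a + b * s) * Real.sqrt (s + 1)) * (s + 1) := by ring
        _ ≤ (((a + b * s) + x * (s + 1)) / (2 * c)) * (s + 1) :=
            mul_le_mul_of_nonneg_right key hQ
        _ = g s := by
            simp only [hg]
            rw [← hcx]; field_simp
  have hgval : (∫ s in (-1 : ℝ)..1, g s) = a / c + c + b / (3 * c) + c / 3 := by
    have hgeq : ∀ s : ℝ, g s = (a / (2 * c) + c / 2) + ((a + b) / (2 * c) + c) * s
        + (b / (2 * c) + c / 2) * s ^ 2 := by
      intro s; rw [hg]; field_simp; ring
    calc (∫ s in (-1 : ℝ)..1, g s)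
        = ∫ s in (-1 : ℝ)..1, ((a / (2 * c) + c / 2) + ((a + b) / (2 * c) + c) * s
            + (b / (2 * c) + c / 2) * s ^ 2) := by
          apply intervalIntegral.integral_congr; intro s _; exact hgeq s
      _ = 2 * (a / (2 * c) + c / 2) + 2 / 3 * (b / (2 * c) + c / 2) := hpoly _ _ _
      _ = a / c + c + b / (3 * c) + c / 3 := by field_simp; ring
  have hxc : x / c = c := by
    rw [← hcx]; field_simp
  calc u a b ≤ a / c + c + b / (3 * c) + c / 3 := hgval ▸ hgle
    _ ≤ x / c + c + x / (3 * c) + c / 3 := by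
        gcongr; linarith
    _ = 8 / 3 * c := by
        rw [hxc]
        have : x / (3 * c) = c / 3 := by rw [← hcx]; field_simp
        rw [this]; ring
    _ = u x x := huxx.symm
end

section
/- Let u : ℝ × ℝⁿ → [−∞, ∞) be concave (i.e. its hypograph is convex), let (x,q) ∈ ℝ × ℝⁿ with u(x,q) finite, and let p ∈ ℝⁿ be a marginal price at (x,q), i.e. u(x − ⟨q', p⟩, q + q') ≤ u(x,q) for all q' ∈ ℝⁿ. Assume also that the point (x + ⟨q,p⟩, 0) lies in the topological interior of {(a,b) : u(a,b) > −∞}. Then there exist y ∈ ℝ and r ∈ ℝⁿ with r = y·p such that (y,r) is a supergradient of u at (x,q), i.e. u(a,b) ≤ u(x,q) + y·(a − x) + ⟨r, b − q⟩ for all (a,b); moreover, if in addition u(x + 1, q) > u(x,q), then y > 0. -/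
/-!
Project the hypograph of `u` along the price functional `ℓ (a, b) = a + ⟪b, p⟫`. The image is a
convex subset of the plane which, by marginality of `p`, lies below height `c` over
`t₀ = ℓ (x, q)`, and `t₀` is interior to its shadow on the first axis. Comparing slopes of chords
on both sides of `t₀` yields a line of some slope `y` through `(t₀, c)` above this set, i.e.
`u w ≤ c + y (ℓ w - t₀)`, which says that `(y, y • p)` is a supergradient. Evaluating at
`(x + 1, q)` shows `y > 0` when `u` increases in `x`.
-/

open scoped RealInnerProductSpace

open Topology

theorem Convex.mul_sub_le_mul_sub_of_fst_lt {H : Set (ℝ × ℝ)} (hH : Convex ℝ H) {t₀ c : ℝ}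
    (hc : ∀ s, (t₀, s) ∈ H → s ≤ c) {z z' : ℝ × ℝ} (hz : z ∈ H) (hz' : z' ∈ H)
    (hlt : z.1 < t₀) (hgt : t₀ < z'.1) :
    (z'.2 - c) * (t₀ - z.1) ≤ (c - z.2) * (z'.1 - t₀) := by
  obtain ⟨t, s⟩ := z
  obtain ⟨t', s'⟩ := z'
  dsimp only at *
  have hd : 0 < t' - t := by linarith
  -- the point of the chord from `(t, s)` to `(t', s')` lying over `t₀`
  have hmem := hH hz hz' (a := (t' - t₀) / (t' - t)) (b := (t₀ - t) / (t' - t))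
    (div_nonneg (by linarith) hd.le) (div_nonneg (by linarith) hd.le)
    (by field_simp; ring)
  have hfst : (t' - t₀) / (t' - t) * t + (t₀ - t) / (t' - t) * t' = t₀ := by
    field_simp; ring
  simp only [Prod.smul_mk, Prod.mk_add_mk, smul_eq_mul, hfst] at hmem
  have h := hc _ hmem
  rw [div_mul_eq_mul_div, div_mul_eq_mul_div, ← add_div, div_le_iff₀ hd] at h
  linarith

theorem Convex.exists_le_add_mul_of_mem_interior_image_fst {H : Set (ℝ × ℝ)} (hH : Convex ℝ H)
    {t₀ c : ℝ} (hc : ∀ s, (t₀, s) ∈ H → s ≤ c) (hint : t₀ ∈ interior (Prod.fst '' H)) :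
    ∃ y : ℝ, ∀ z ∈ H, z.2 ≤ c + y * (z.1 - t₀) := by
  have hnhds : ∀ᶠ t in 𝓝 t₀, t ∈ Prod.fst '' H := mem_interior_iff_mem_nhds.mp hint
  obtain ⟨_, hl, zl, hzl, rfl⟩ := hnhds.exists_lt
  obtain ⟨_, hr, zr, hzr, rfl⟩ := hnhds.exists_gt
  set R := {m | ∃ z ∈ H, t₀ < z.1 ∧ m = (z.2 - c) / (z.1 - t₀)}
  set L := {m | ∃ z ∈ H, z.1 < t₀ ∧ m = (c - z.2) / (t₀ - z.1)}
  obtain ⟨y, hyR, hyL⟩ := exists_between_of_forall_le (s := R) (t := L)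
    ⟨_, zr, hzr, hr, rfl⟩ ⟨_, zl, hzl, hl, rfl⟩ <| by
      rintro _ ⟨z', hz', hgt, rfl⟩ _ ⟨z, hz, hlt, rfl⟩
      rw [div_le_div_iff₀ (by linarith) (by linarith)]
      exact hH.mul_sub_le_mul_sub_of_fst_lt hc hz hz' hlt hgt
  refine ⟨y, fun z hz => ?_⟩
  rcases lt_trichotomy z.1 t₀ with hlt | heq | hgt
  · have := hyL ⟨z, hz, hlt, rfl⟩
    rw [le_div_iff₀ (by linarith)] at this
    linarith
  · have := hc z.2 (heq ▸ hz)
    rw [heq]; linarith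
  · have := hyR ⟨z, hz, hgt, rfl⟩
    rw [div_le_iff₀ (by linarith)] at this
    linarith

theorem exists_le_add_mul_of_forall_fiber_le {E : Type*} [AddCommGroup E] [Module ℝ E]
    (f : E →ₗ[ℝ] ℝ) {u : E → WithBot ℝ}
    (hconc : Convex ℝ {wt : E × ℝ | (wt.2 : WithBot ℝ) ≤ u wt.1}) {w₀ : E} {c : ℝ}
    (hfin : u w₀ = c) (hfiber : ∀ w, f w = f w₀ → u w ≤ u w₀)
    (hint : f w₀ ∈ interior (f '' {w | ⊥ < u w})) :
    ∃ y : ℝ, ∀ w, u w ≤ ((c + y * (f w - f w₀) : ℝ) : WithBot ℝ) := by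
  set H := f.prodMap LinearMap.id '' {wt : E × ℝ | (wt.2 : WithBot ℝ) ≤ u wt.1}
  have hmem : ∀ w (s : ℝ), (s : WithBot ℝ) ≤ u w → (f w, s) ∈ H := fun w s h => ⟨(w, s), h, rfl⟩
  have hc : ∀ s, (f w₀, s) ∈ H → s ≤ c := by
    rintro s ⟨⟨w, s⟩, hs, h⟩
    obtain ⟨hw, rfl⟩ := Prod.ext_iff.mp h
    exact_mod_cast hs.trans (hfin ▸ hfiber w hw)
  have hdom : f '' {w | ⊥ < u w} ⊆ Prod.fst '' H := by
    rintro _ ⟨w, hw : ⊥ < u w, rfl⟩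
    obtain ⟨s, hs⟩ := WithBot.ne_bot_iff_exists.mp hw.ne'
    exact ⟨(f w, s), hmem w s hs.le, rfl⟩
  obtain ⟨y, hy⟩ := (hconc.linear_image _).exists_le_add_mul_of_mem_interior_image_fst hc
    (interior_mono hdom hint)
  refine ⟨y, fun w => ?_⟩
  rcases eq_or_ne (u w) ⊥ with hbot | hne
  · exact hbot ▸ bot_le
  obtain ⟨s, hs⟩ := WithBot.ne_bot_iff_exists.mp hne
  rw [← hs, WithBot.coe_le_coe]
  exact hy _ (hmem w s hs.le)

def bundleValue {E : Type*} [NormedAddCommGroup E] [InnerProductSpace ℝ E] (p : E) :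
    ℝ × E →ₗ[ℝ] ℝ where
  toFun w := w.1 + ⟪w.2, p⟫
  map_add' v w := by simp only [Prod.fst_add, Prod.snd_add, inner_add_left]; ring
  map_smul' r w := by simp only [Prod.smul_fst, Prod.smul_snd, smul_eq_mul, real_inner_smul_left,
    Real.ringHom_apply]; ring

@[simp]
theorem bundleValue_apply {E : Type*} [NormedAddCommGroup E] [InnerProductSpace ℝ E] (p : E)
    (w : ℝ × E) : bundleValue p w = w.1 + ⟪w.2, p⟫ :=
  rfl

theorem stmt12 (n : ℕ) (u : ℝ × EuclideanSpace ℝ (Fin n) → WithBot ℝ)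
    (hconc : Convex ℝ {wt : (ℝ × EuclideanSpace ℝ (Fin n)) × ℝ | (wt.2 : WithBot ℝ) ≤ u wt.1})
    (x : ℝ) (q : EuclideanSpace ℝ (Fin n)) (c : ℝ) (hfin : u (x, q) = (c : WithBot ℝ))
    (p : EuclideanSpace ℝ (Fin n))
    (hmarg : ∀ q' : EuclideanSpace ℝ (Fin n), u (x - ⟪q', p⟫, q + q') ≤ u (x, q))
    (hint : ((x + ⟪q, p⟫, (0 : EuclideanSpace ℝ (Fin n))) : ℝ × EuclideanSpace ℝ (Fin n)) ∈
      interior {w : ℝ × EuclideanSpace ℝ (Fin n) | (⊥ : WithBot ℝ) < u w}) :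
    ∃ (y : ℝ) (r : EuclideanSpace ℝ (Fin n)), r = y • p ∧
      (∀ (a : ℝ) (b : EuclideanSpace ℝ (Fin n)),
        u (a, b) ≤ ((c + y * (a - x) + ⟪r, b - q⟫ : ℝ) : WithBot ℝ)) ∧
      (u (x, q) < u (x + 1, q) → 0 < y) := by
  have hfiber : ∀ w, bundleValue p w = bundleValue p (x, q) → u w ≤ u (x, q) := by
    rintro ⟨a, b⟩ h
    have ha : x - ⟪b - q, p⟫ = a := by
      simp only [bundleValue_apply] at h
      rw [inner_sub_left]; linarith
    simpa [ha] using hmarg (b - q)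
  have hdom : (fun t : ℝ => (t, (0 : EuclideanSpace ℝ (Fin n)))) ⁻¹' {w | ⊥ < u w} ⊆
      bundleValue p '' {w | ⊥ < u w} :=
    fun t ht => ⟨(t, 0), ht, by simp⟩
  obtain ⟨y, hy⟩ := exists_le_add_mul_of_forall_fiber_le (bundleValue p) hconc hfin hfiber
    (interior_mono hdom (preimage_interior_subset_interior_preimage (by fun_prop) hint))
  refine ⟨y, y • p, rfl, fun a b => ?_, fun hlt => ?_⟩
  · convert hy (a, b) using 2
    simp only [bundleValue_apply, real_inner_smul_left,
      inner_sub_right, real_inner_comm p]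
    ring
  · have h := (hfin ▸ hlt).trans_le (hy (x + 1, q))
    simp only [bundleValue_apply, WithBot.coe_lt_coe] at h
    linarith
end
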